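/- The class of AT-free graphs is closed under twin addition, and the Bull is AT-free; hence every graph obtained from an induced subgraph of the Bull by a sequence of twin additions is AT-free. In particular every graph in DH ∩ co-DH is AT-free. -/

import Mathlib

open SimpleGraph

/-- The Bull: triangle 0,1,2 with pendant vertices 3 (adjacent to 0) and 4 (adjacent to 1). -/
def Bull : SimpleGraph (Fin 5) := fromEdgeSet {s(0,1), s(0,2), s(1,2), s(0,3), s(1,4)}

/-- A graph is distance-hereditary if every connected induced subgraph preserves distances. -/
def DistanceHereditary {V : Type*} (G : SimpleGraph V) : Prop :=
  ∀ s : Set V, (G.induce s).Connected → ∀ u v : s, (G.induce s).dist u v = G.dist u v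

/-- `u` and `v` are twins: all other vertices see `u` iff they see `v`. -/
def Twins {V : Type*} (G : SimpleGraph V) (u v : V) : Prop :=
  u ≠ v ∧ ∀ w, w ≠ u → w ≠ v → (G.Adj u w ↔ G.Adj v w)

/-- One twin-elimination step on vertex subsets: remove from `s` a vertex having a twin
in the graph induced on `s`. -/
def TwinElimStep {V : Type*} (G : SimpleGraph V) (s t : Set V) : Prop :=
  ∃ v ∈ s, t = s \ {v} ∧
    ∃ u ∈ s, u ≠ v ∧ ∀ w ∈ s, w ≠ u → w ≠ v → (G.Adj u w ↔ G.Adj v w)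

/-- An asteroidal triple: three distinct vertices such that each pair is joined by a
path avoiding the closed neighbourhood of the third. -/
def AsteroidalTriple {V : Type*} (G : SimpleGraph V) (a b c : V) : Prop :=
  a ≠ b ∧ a ≠ c ∧ b ≠ c ∧
  (∃ p : G.Walk a b, ∀ w ∈ p.support, w ≠ c ∧ ¬ G.Adj c w) ∧
  (∃ p : G.Walk a c, ∀ w ∈ p.support, w ≠ b ∧ ¬ G.Adj b w) ∧
  (∃ p : G.Walk b c, ∀ w ∈ p.support, w ≠ a ∧ ¬ G.Adj a w)

/-- `G` is AT-free if it contains no asteroidal triple. -/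
def ATFree {V : Type*} (G : SimpleGraph V) : Prop :=
  ¬ ∃ a b c, AsteroidalTriple G a b c

section A
variable {V : Type*} {W : Type*}

lemma reach_induce {G : SimpleGraph V} {S : Set V} :
    ∀ {x y : V} (p : G.Walk x y), (∀ w ∈ p.support, w ∈ S) →
      ∀ (hx : x ∈ S) (hy : y ∈ S), (G.induce S).Reachable ⟨x, hx⟩ ⟨y, hy⟩ := by
  intro x y p
  induction p with
  | nil => intro _ hx hy; exact Reachable.refl _
  | @cons x m y h q ih =>
    intro hs hx hy
    have hm : m ∈ S := hs m (by rw [Walk.support_cons]; exact List.mem_cons_of_mem _ q.start_mem_support)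
    have step : (G.induce S).Adj ⟨x, hx⟩ ⟨m, hm⟩ := h
    exact step.reachable.trans
      (ih (fun w hw => hs w (by rw [Walk.support_cons]; exact List.mem_cons_of_mem _ hw)) hm hy)

lemma exists_suffix_walk {G : SimpleGraph V} :
    ∀ {x y : V} (p : G.Walk x y) (i : ℕ),
      ∃ r : G.Walk (p.getVert i) y, r.length ≤ p.length - i := by
  intro x y p
  induction p with
  | nil => intro i; exact ⟨Walk.nil, by simp⟩
  | @cons x m y h q ih =>
    intro i
    cases i with
    | zero => exact ⟨Walk.cons h q, by simp; exact le_rfl⟩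
    | succ i =>
      obtain ⟨r, hr⟩ := ih i
      refine ⟨r.copy (Walk.getVert_cons_succ q h).symm rfl, ?_⟩
      rw [Walk.length_copy, Walk.length_cons]
      omega

lemma bull_adj_iff (a b : Fin 5) : Bull.Adj a b ↔
    ((a=0∧b=1)∨(a=1∧b=0)∨(a=0∧b=2)∨(a=2∧b=0)∨(a=1∧b=2)∨(a=2∧b=1)∨(a=0∧b=3)∨(a=3∧b=0)∨(a=1∧b=4)∨(a=4∧b=1)) := by
  rw [Bull, fromEdgeSet_adj]
  constructor
  · rintro ⟨hm, hne⟩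
    simp only [Set.mem_insert_iff, Set.mem_singleton_iff] at hm
    rcases hm with h|h|h|h|h <;> rw [Sym2.eq_iff] at h <;>
      rcases h with ⟨rfl,rfl⟩|⟨rfl,rfl⟩ <;> decide
  · rintro (⟨rfl,rfl⟩|⟨rfl,rfl⟩|⟨rfl,rfl⟩|⟨rfl,rfl⟩|⟨rfl,rfl⟩|⟨rfl,rfl⟩|⟨rfl,rfl⟩|⟨rfl,rfl⟩|⟨rfl,rfl⟩|⟨rfl,rfl⟩) <;>
      exact ⟨by simp only [Set.mem_insert_iff, Set.mem_singleton_iff, Sym2.eq_iff]; decide, by decide⟩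

instance : DecidableRel Bull.Adj := fun a b => decidable_of_iff _ (bull_adj_iff a b).symm

example : ∀ a b c : Fin 5, a ≠ b → a ≠ c → b ≠ c → ¬Bull.Adj a b → ¬Bull.Adj a c → ¬Bull.Adj b c →
    (c = 2 ∧ (a = 3 ∨ a = 4)) ∨ (b = 2 ∧ (a = 3 ∨ a = 4)) ∨ (a = 2 ∧ (b = 3 ∨ b = 4)) := by decide

example : ∀ x w : Fin 5, (x = 3 ∨ x = 4) → Bull.Adj x w → w ≠ 2 → ¬Bull.Adj 2 w → False := by decide

end A

section B
variable {V : Type*} {W : Type*}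

lemma exists_snd {G : SimpleGraph V} {x y : V} (p : G.Walk x y) (hxy : x ≠ y) :
    ∃ w ∈ p.support, G.Adj x w := by
  cases p with
  | nil => exact absurd rfl hxy
  | cons h q =>
    exact ⟨_, by rw [Walk.support_cons]; exact List.mem_cons_of_mem _ q.start_mem_support, h⟩

lemma bullATFree : ATFree Bull := by
  rintro ⟨a, b, c, dab, dac, dbc, ⟨p1, h1⟩, ⟨p2, h2⟩, ⟨p3, h3⟩⟩
  have nab : ¬Bull.Adj a b := fun h => (h2 a p2.start_mem_support).2 h.symm
  have nbc : ¬Bull.Adj b c := (h2 c p2.end_mem_support).2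
  have nac : ¬Bull.Adj a c := (h3 c p3.end_mem_support).2
  have key : ∀ a b c : Fin 5, a ≠ b → a ≠ c → b ≠ c →
      ¬Bull.Adj a b → ¬Bull.Adj a c → ¬Bull.Adj b c →
      (c = 2 ∧ (a = 3 ∨ a = 4)) ∨ (b = 2 ∧ (a = 3 ∨ a = 4)) ∨ (a = 2 ∧ (b = 3 ∨ b = 4)) := by
    decide
  have fin : ∀ x w : Fin 5, (x = 3 ∨ x = 4) → Bull.Adj x w → w ≠ 2 → ¬Bull.Adj 2 w → False := by
    decide
  rcases key a b c dab dac dbc nab nac nbc with ⟨hc2, ha⟩ | ⟨hb2, ha⟩ | ⟨ha2, hb⟩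
  · obtain ⟨w, hw, haw⟩ := exists_snd p1 dab
    exact fin a w ha haw (hc2 ▸ (h1 w hw).1) (hc2 ▸ (h1 w hw).2)
  · obtain ⟨w, hw, haw⟩ := exists_snd p2 dac
    exact fin a w ha haw (hb2 ▸ (h2 w hw).1) (hb2 ▸ (h2 w hw).2)
  · obtain ⟨w, hw, hbw⟩ := exists_snd p3 dbc
    exact fin b w hb hbw (ha2 ▸ (h3 w hw).1) (ha2 ▸ (h3 w hw).2)

end B

section C
open scoped Classical
variable {V : Type*}

lemma Twins.symm {G : SimpleGraph V} {u v : V} (h : Twins G u v) : Twins G v u :=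
  ⟨h.1.symm, fun w h1 h2 => (h.2 w h2 h1).symm⟩

lemma reach_of_eq {G : SimpleGraph V} {S : Set V} {z1 z2 : ↥S} (h : (z1 : V) = (z2 : V)) :
    (G.induce S).Reachable z1 z2 := by
  cases Subtype.ext h
  exact Reachable.refl _

lemma reach_of_adj {G : SimpleGraph V} {S : Set V} {z1 z2 : ↥S} (h : G.Adj ↑z1 ↑z2) :
    (G.induce S).Reachable z1 z2 :=
  (show (G.induce S).Adj z1 z2 from h).reachable

/-- interior-vertex-neighbour lemma -/
lemma exists_adj_of_mem_support {G : SimpleGraph V} :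
    ∀ {x y : V} (p : G.Walk x y), ∀ e ∈ p.support,
      (∃ w ∈ p.support, G.Adj w e) ∨ p.support = [x] := by
  intro x y p
  induction p with
  | nil => intro e he; right; rfl
  | @cons x m y h q ih =>
    intro e he
    rw [Walk.support_cons] at he
    rcases List.mem_cons.mp he with rfl | he'
    · exact Or.inl ⟨m, by rw [Walk.support_cons]; exact List.mem_cons_of_mem _ q.start_mem_support,
        h.symm⟩
    · rcases ih e he' with ⟨w, hw, hadj⟩ | hq
      · exact Or.inl ⟨w, by rw [Walk.support_cons]; exact List.mem_cons_of_mem _ hw, hadj⟩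
      · have : e = m := by rw [hq] at he'; simpa using he'
        subst this
        exact Or.inl ⟨x, by rw [Walk.support_cons]; exact List.mem_cons_self, h⟩

lemma exists_adj_of_mem_support' {G : SimpleGraph V} {x y : V} (p : G.Walk x y)
    (hxy : x ≠ y) {e : V} (he : e ∈ p.support) : ∃ w ∈ p.support, G.Adj w e := by
  rcases exists_adj_of_mem_support p e he with h | h
  · exact h
  · exfalso
    have hy := p.end_mem_support
    rw [h] at hy
    simp at hy
    exact hxy hy.symm

/-- if a walk avoids the closed neighbourhood of `v`, then the twin `u` is not on it -/
lemma twin_not_mem_support {G : SimpleGraph V} {u v : V} (tw : Twins G u v)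
    {x y : V} (p : G.Walk x y) (hxy : x ≠ y)
    (hsupp : ∀ w ∈ p.support, w ≠ v ∧ ¬ G.Adj v w) : u ∉ p.support := by
  intro hu
  obtain ⟨w, hw, hadj⟩ := exists_adj_of_mem_support' p hxy hu
  have hwv : w ≠ v := (hsupp w hw).1
  have hwnv : ¬ G.Adj v w := (hsupp w hw).2
  have hwu : w ≠ u := fun h => G.irrefl (h ▸ hadj)
  exact hwnv ((tw.2 w hwu hwv).mp hadj.symm)

lemma sigma_mem {u v x : V} {T : Set V} (hu : u ∈ T) (huv : u ≠ v) (hx : x ∈ T) :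
    (if x = v then u else x) ∈ T \ {v} := by
  split
  · exact ⟨hu, huv⟩
  · next h => exact ⟨hx, h⟩

lemma reroute {G : SimpleGraph V} {u v : V} (tw : Twins G u v) {T : Set V} (hu : u ∈ T) :
    ∀ {x y : V} (p : G.Walk x y) (hs : ∀ w ∈ p.support, w ∈ T),
    (G.induce (T \ {v})).Reachable
      ⟨_, sigma_mem hu tw.1 (hs x p.start_mem_support)⟩
      ⟨_, sigma_mem hu tw.1 (hs y p.end_mem_support)⟩ := by
  intro x y p
  induction p with
  | nil => intro _; exact Reachable.refl _
  | @cons x m y h q ih =>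
    intro hs
    have hxT : x ∈ T := hs x (by simp [Walk.support_cons])
    have hmT : m ∈ T := hs m (by rw [Walk.support_cons]; exact List.mem_cons_of_mem _ q.start_mem_support)
    have hs' : ∀ w ∈ q.support, w ∈ T := fun w hw =>
      hs w (by rw [Walk.support_cons]; exact List.mem_cons_of_mem _ hw)
    have tail := ih hs'
    refine Reachable.trans ?_ tail
    by_cases hxv : x = v
    · have hmv : m ≠ v := fun hmv' => G.irrefl (by rw [hxv, hmv'] at h; exact h)
      by_cases hmu : m = u
      · exact reach_of_eq (by simp only [if_pos hxv, if_neg hmv]; exact hmu.symm)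
      · refine reach_of_adj ?_
        simp only [if_pos hxv, if_neg hmv]
        exact (tw.2 m hmu hmv).mpr (by rw [hxv] at h; exact h)
    · by_cases hmv : m = v
      · by_cases hxu : x = u
        · exact reach_of_eq (by simp only [if_neg hxv, if_pos hmv]; exact hxu)
        · refine reach_of_adj ?_
          simp only [if_neg hxv, if_pos hmv]
          exact ((tw.2 x hxu hxv).mpr (by rw [hmv] at h; exact h.symm)).symm
      · exact reach_of_adj (by simp only [if_neg hxv, if_neg hmv]; exact h)

end C

section D
open scoped Classical
variable {V : Type*}

noncomputable def twSwap (u v x : V) : V := if x = v then u else x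

def SStar (G : SimpleGraph V) (v c : V) : Set V := {z | z ≠ v ∧ z ≠ c ∧ ¬ G.Adj c z}

lemma twSwap_ne_v {u v x : V} (huv : u ≠ v) : twSwap u v x ≠ v := by
  unfold twSwap; split
  · exact huv
  · next h => exact h

lemma twSwap_inj {u v a b : V} (dab : a ≠ b) (E : ¬(a = u ∧ b = v)) (E' : ¬(a = v ∧ b = u)) :
    twSwap u v a ≠ twSwap u v b := by
  unfold twSwap
  split
  · next ha =>
    split
    · next hb => exact absurd (ha.trans hb.symm) dab
    · next hb => exact fun h => E' ⟨ha, h.symm⟩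
  · next ha =>
    split
    · next hb => exact fun h => E ⟨h, hb⟩
    · next hb => exact dab

lemma reach_congr {G : SimpleGraph V} {S S' : Set V} (hS : S = S') {a b a' b' : V}
    {ha : a ∈ S} {hb : b ∈ S} (hA : a = a') (hB : b = b')
    (h : (G.induce S).Reachable ⟨a, ha⟩ ⟨b, hb⟩) {ha' : a' ∈ S'} {hb' : b' ∈ S'} :
    (G.induce S').Reachable ⟨a', ha'⟩ ⟨b', hb'⟩ := by
  subst hS; subst hA; subst hB; exact h

lemma component {G : SimpleGraph V} {u v : V} (tw : Twins G u v) {x y t : V} (p : G.Walk x y)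
    (hsupp : ∀ w ∈ p.support, w ≠ t ∧ ¬ G.Adj t w) (hxy : x ≠ y)
    (E1 : ¬(x = u ∧ t = v)) (E2 : ¬(x = v ∧ t = u))
    (E3 : ¬(y = u ∧ t = v)) (E4 : ¬(y = v ∧ t = u)) :
    ∃ (hx : twSwap u v x ∈ SStar G v (twSwap u v t)) (hy : twSwap u v y ∈ SStar G v (twSwap u v t)),
      (G.induce (SStar G v (twSwap u v t))).Reachable ⟨_, hx⟩ ⟨_, hy⟩ := by
  have hxt : x ≠ t := (hsupp x p.start_mem_support).1
  have hyt : y ≠ t := (hsupp y p.end_mem_support).1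
  by_cases ht : t = v
  · -- the avoided vertex is v; walk already avoids v, and cannot meet u
    have hxv : x ≠ v := ht ▸ hxt
    have hyv : y ≠ v := ht ▸ hyt
    have hT : twSwap u v t = u := by simp [twSwap, ht]
    have hX : twSwap u v x = x := by simp [twSwap, hxv]
    have hY : twSwap u v y = y := by simp [twSwap, hyv]
    have hunot : u ∉ p.support := twin_not_mem_support tw p hxy (ht ▸ hsupp)
    have hsub : ∀ w ∈ p.support, w ∈ SStar G v u := by
      intro w hw
      have h1 := (hsupp w hw).1
      have h2 := (hsupp w hw).2
      have hwv : w ≠ v := ht ▸ h1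
      have hwu : w ≠ u := fun h => hunot (h ▸ hw)
      exact ⟨hwv, hwu, fun hadj => (ht ▸ h2 : ¬ G.Adj v w) ((tw.2 w hwu hwv).mp hadj)⟩
    refine ⟨?_, ?_, reach_congr (by rw [hT]) hX.symm hY.symm
      (reach_induce p hsub (hsub x p.start_mem_support) (hsub y p.end_mem_support))⟩
    · rw [hT, hX]; exact hsub x p.start_mem_support
    · rw [hT, hY]; exact hsub y p.end_mem_support
  · have hT : twSwap u v t = t := by simp [twSwap, ht]
    by_cases hvp : v ∈ p.support
    · by_cases htu : t = u
      · exact absurd hvp (twin_not_mem_support tw.symm p hxy (htu ▸ hsupp))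
      · have hvt : v ≠ t := (hsupp v hvp).1
        have hntv : ¬ G.Adj t v := (hsupp v hvp).2
        have hntu : ¬ G.Adj t u := fun h => hntv (((tw.2 t htu ht).mp h.symm).symm)
        have huT : u ∈ ({z | z ≠ t ∧ ¬ G.Adj t z} : Set V) := ⟨fun h => htu h.symm, hntu⟩
        have hR := reroute tw (T := {z | z ≠ t ∧ ¬ G.Adj t z}) huT p (fun w hw => hsupp w hw)
        have hset : ({z | z ≠ t ∧ ¬ G.Adj t z} : Set V) \ {v} = SStar G v t := by
          ext z
          simp only [SStar, Set.mem_diff, Set.mem_setOf_eq, Set.mem_singleton_iff]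
          tauto
        have hmx := sigma_mem (x := x) huT tw.1 (hsupp x p.start_mem_support)
        have hmy := sigma_mem (x := y) huT tw.1 (hsupp y p.end_mem_support)
        rw [hset] at hmx hmy
        refine ⟨?_, ?_, reach_congr (by rw [hT, hset]) rfl rfl hR⟩
        · rw [hT]; exact hmx
        · rw [hT]; exact hmy
    · have hxv : x ≠ v := fun h => hvp (h ▸ p.start_mem_support)
      have hyv : y ≠ v := fun h => hvp (h ▸ p.end_mem_support)
      have hX : twSwap u v x = x := by simp [twSwap, hxv]
      have hY : twSwap u v y = y := by simp [twSwap, hyv]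
      have hsub : ∀ w ∈ p.support, w ∈ SStar G v t := fun w hw =>
        ⟨fun h => hvp (h ▸ hw), (hsupp w hw).1, (hsupp w hw).2⟩
      refine ⟨?_, ?_, reach_congr (by rw [hT]) hX.symm hY.symm
        (reach_induce p hsub (hsub x p.start_mem_support) (hsub y p.end_mem_support))⟩
      · rw [hT, hX]; exact hsub x p.start_mem_support
      · rw [hT, hY]; exact hsub y p.end_mem_support

lemma component_to_H {G : SimpleGraph V} {B : Set V} {x y c : V}
    {A : Set V} (hAB : ∀ z ∈ A, z ∈ B) (hA : ∀ z ∈ A, z ≠ c ∧ ¬ G.Adj c z)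
    (hx : x ∈ A) (hy : y ∈ A) (hcB : c ∈ B) (hxB : x ∈ B) (hyB : y ∈ B)
    (h : (G.induce A).Reachable ⟨x, hx⟩ ⟨y, hy⟩) :
    ∃ p : (G.induce B).Walk ⟨x, hxB⟩ ⟨y, hyB⟩,
      ∀ w ∈ p.support, w ≠ ⟨c, hcB⟩ ∧ ¬ (G.induce B).Adj ⟨c, hcB⟩ w := by
  obtain ⟨q⟩ := h
  let f : G.induce A ↪g G.induce B :=
    ⟨⟨fun z => ⟨z.1, hAB _ z.2⟩, fun z w hzw => by
      apply Subtype.ext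
      have := congrArg Subtype.val hzw
      exact this⟩, Iff.rfl⟩
  refine ⟨q.map f.toHom, ?_⟩
  intro w hw
  rw [Walk.support_map, List.mem_map] at hw
  obtain ⟨w', _, rfl⟩ := hw
  exact ⟨fun hh => (hA _ w'.2).1 (congrArg Subtype.val hh), fun hh => (hA _ w'.2).2 hh⟩

lemma twinAddATFree (G' : SimpleGraph V) (u v : V) (tw : Twins G' u v)
    (hAT : ATFree (G'.induce {v}ᶜ)) : ATFree G' := by
  rintro ⟨a, b, c, dab, dac, dbc, ⟨p1, h1⟩, ⟨p2, h2⟩, ⟨p3, h3⟩⟩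
  have E1 : ¬(a = u ∧ b = v) := fun h => twin_not_mem_support tw p2 dac (h.2 ▸ h2) (h.1 ▸ p2.start_mem_support)
  have E2 : ¬(a = v ∧ b = u) := fun h => twin_not_mem_support tw.symm p2 dac (h.2 ▸ h2) (h.1 ▸ p2.start_mem_support)
  have E3 : ¬(a = u ∧ c = v) := fun h => twin_not_mem_support tw p1 dab (h.2 ▸ h1) (h.1 ▸ p1.start_mem_support)
  have E4 : ¬(a = v ∧ c = u) := fun h => twin_not_mem_support tw.symm p1 dab (h.2 ▸ h1) (h.1 ▸ p1.start_mem_support)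
  have E5 : ¬(b = u ∧ c = v) := fun h => twin_not_mem_support tw p1 dab (h.2 ▸ h1) (h.1 ▸ p1.end_mem_support)
  have E6 : ¬(b = v ∧ c = u) := fun h => twin_not_mem_support tw.symm p1 dab (h.2 ▸ h1) (h.1 ▸ p1.end_mem_support)
  have E7 : ¬(c = u ∧ b = v) := fun h => twin_not_mem_support tw p2 dac (h.2 ▸ h2) (h.1 ▸ p2.end_mem_support)
  have E8 : ¬(c = v ∧ b = u) := fun h => twin_not_mem_support tw.symm p2 dac (h.2 ▸ h2) (h.1 ▸ p2.end_mem_support)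
  obtain ⟨hx1, hy1, r1⟩ := component tw p1 h1 dab E3 E4 E5 E6
  obtain ⟨hx2, hy2, r2⟩ := component tw p2 h2 dac E1 E2 E7 E8
  obtain ⟨hx3, hy3, r3⟩ := component tw p3 h3 dbc
    (fun h => E2 ⟨h.2, h.1⟩) (fun h => E1 ⟨h.2, h.1⟩) (fun h => E4 ⟨h.2, h.1⟩) (fun h => E3 ⟨h.2, h.1⟩)
  apply hAT
  refine ⟨⟨twSwap u v a, twSwap_ne_v tw.1⟩, ⟨twSwap u v b, twSwap_ne_v tw.1⟩,
    ⟨twSwap u v c, twSwap_ne_v tw.1⟩, ?_, ?_, ?_, ?_, ?_, ?_⟩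
  · exact fun h => twSwap_inj dab E1 E2 (congrArg Subtype.val h)
  · exact fun h => twSwap_inj dac E3 E4 (congrArg Subtype.val h)
  · exact fun h => twSwap_inj dbc E5 E6 (congrArg Subtype.val h)
  · exact component_to_H (fun z hz => hz.1) (fun z hz => ⟨hz.2.1, hz.2.2⟩) hx1 hy1
      (twSwap_ne_v tw.1) (twSwap_ne_v tw.1) (twSwap_ne_v tw.1) r1
  · exact component_to_H (fun z hz => hz.1) (fun z hz => ⟨hz.2.1, hz.2.2⟩) hx2 hy2
      (twSwap_ne_v tw.1) (twSwap_ne_v tw.1) (twSwap_ne_v tw.1) r2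
  · exact component_to_H (fun z hz => hz.1) (fun z hz => ⟨hz.2.1, hz.2.2⟩) hx3 hy3
      (twSwap_ne_v tw.1) (twSwap_ne_v tw.1) (twSwap_ne_v tw.1) r3

end D

section E
variable {V : Type*} {W : Type*}

lemma atfree_of_embedding {H : SimpleGraph W} {G : SimpleGraph V} (f : H ↪g G)
    (hG : ATFree G) : ATFree H := by
  rintro ⟨a, b, c, dab, dac, dbc, ⟨p1, h1⟩, ⟨p2, h2⟩, ⟨p3, h3⟩⟩
  refine hG ⟨f a, f b, f c, f.injective.ne dab, f.injective.ne dac, f.injective.ne dbc,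
    ⟨p1.map f.toHom, ?_⟩, ⟨p2.map f.toHom, ?_⟩, ⟨p3.map f.toHom, ?_⟩⟩ <;>
  · intro w hw
    rw [Walk.support_map, List.mem_map] at hw
    obtain ⟨w', hw', rfl⟩ := hw
    first
    | exact ⟨f.injective.ne (h1 w' hw').1, fun h => (h1 w' hw').2 (f.map_adj_iff.mp h)⟩
    | exact ⟨f.injective.ne (h2 w' hw').1, fun h => (h2 w' hw').2 (f.map_adj_iff.mp h)⟩
    | exact ⟨f.injective.ne (h3 w' hw').1, fun h => (h3 w' hw').2 (f.map_adj_iff.mp h)⟩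

lemma part3 {V : Type*} (G : SimpleGraph V) (s : Set V)
    (hrel : Relation.ReflTransGen (TwinElimStep G) Set.univ s)
    (hemb : Nonempty (G.induce s ↪g Bull)) : ATFree G := by
  obtain ⟨f⟩ := hemb
  have hbase : ATFree (G.induce s) := atfree_of_embedding f bullATFree
  have key : ∀ t : Set V, Relation.ReflTransGen (TwinElimStep G) t s → ATFree (G.induce t) := by
    intro t0 h0
    induction h0 using Relation.ReflTransGen.head_induction_on with
    | refl => exact hbase
    | head hstep _ ih =>
      rename_i t t' _
      obtain ⟨v, hvs, rfl, u, hus, huv, htw⟩ := hstep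
      have tw : Twins (G.induce t) ⟨u, hus⟩ ⟨v, hvs⟩ :=
        ⟨fun h => huv (congrArg Subtype.val h),
         fun w hwu hwv => htw w.1 w.2 (fun h => hwu (Subtype.ext h)) (fun h => hwv (Subtype.ext h))⟩
      apply twinAddATFree (G.induce t) ⟨u, hus⟩ ⟨v, hvs⟩ tw
      have emb : ((G.induce t).induce {(⟨v, hvs⟩ : ↥t)}ᶜ) ↪g (G.induce (t \ {v})) :=
        ⟨⟨fun z => ⟨z.1.1, ⟨z.1.2, fun h => z.2 (Subtype.ext h)⟩⟩, fun z w hzw => by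
          rcases z with ⟨⟨z1, hz1⟩, hz2⟩
          rcases w with ⟨⟨w1, hw1⟩, hw2⟩
          simp only [Subtype.mk.injEq] at hzw ⊢
          exact congrArg Subtype.val hzw⟩, Iff.rfl⟩
      exact atfree_of_embedding emb ih
  have huniv : ATFree (G.induce (Set.univ : Set V)) := key _ hrel
  have embU : G ↪g (G.induce (Set.univ : Set V)) :=
    ⟨⟨fun w => ⟨w, trivial⟩, fun z w hzw => congrArg Subtype.val hzw⟩, Iff.rfl⟩
  exact atfree_of_embedding embU huniv

end E

section F
variable {V : Type*}

lemma keyL {H : SimpleGraph V} (hdh : DistanceHereditary H) {p1 p2 p3 p4 w : V}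
    (h12 : H.Adj p1 p2) (h23 : H.Adj p2 p3) (h34 : H.Adj p3 p4)
    (n13 : ¬H.Adj p1 p3) (n14 : ¬H.Adj p1 p4) (n24 : ¬H.Adj p2 p4)
    (hw1 : H.Adj p1 w) (hw4 : H.Adj w p4) : False := by
  have d14 : p1 ≠ p4 := fun h => n13 (by rw [h]; exact h34.symm)
  have s : Set V := {p1, p2, p3, p4}
  have m1 : p1 ∈ ({p1, p2, p3, p4} : Set V) := by simp
  have m2 : p2 ∈ ({p1, p2, p3, p4} : Set V) := by simp
  have m3 : p3 ∈ ({p1, p2, p3, p4} : Set V) := by simp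
  have m4 : p4 ∈ ({p1, p2, p3, p4} : Set V) := by simp
  have a12 : (H.induce ({p1, p2, p3, p4} : Set V)).Adj ⟨p1,m1⟩ ⟨p2,m2⟩ := h12
  have a23 : (H.induce ({p1, p2, p3, p4} : Set V)).Adj ⟨p2,m2⟩ ⟨p3,m3⟩ := h23
  have a34 : (H.induce ({p1, p2, p3, p4} : Set V)).Adj ⟨p3,m3⟩ ⟨p4,m4⟩ := h34
  have conn : (H.induce ({p1, p2, p3, p4} : Set V)).Connected := by
    rw [connected_iff]
    refine ⟨?_, ⟨⟨p1, m1⟩⟩⟩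
    have hto : ∀ z : ↥({p1, p2, p3, p4} : Set V),
        (H.induce ({p1, p2, p3, p4} : Set V)).Reachable z ⟨p1,m1⟩ := by
      rintro ⟨z, hz⟩
      simp only [Set.mem_insert_iff, Set.mem_singleton_iff] at hz
      rcases hz with rfl | rfl | rfl | rfl
      · exact Reachable.refl _
      · exact a12.symm.reachable
      · exact (a23.symm.reachable).trans a12.symm.reachable
      · exact (a34.symm.reachable).trans ((a23.symm.reachable).trans a12.symm.reachable)
    exact fun z1 z2 => (hto z1).trans (hto z2).symm
  have hdist := hdh _ conn ⟨p1,m1⟩ ⟨p4,m4⟩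
  have hle : H.dist p1 p4 ≤ 2 := by
    have := SimpleGraph.dist_le (Walk.cons hw1 (Walk.cons hw4 Walk.nil))
    simpa using this
  obtain ⟨q, hq⟩ := (conn.preconnected ⟨p1,m1⟩ ⟨p4,m4⟩).exists_walk_length_eq_dist
  rw [hdist] at hq
  have h0 : q.length ≠ 0 := fun h => d14 (congrArg Subtype.val (q.eq_of_length_eq_zero h))
  have h1 : q.length ≠ 1 := by
    intro h
    have hadj := q.adj_getVert_succ (show 0 < q.length by omega)
    rw [q.getVert_zero] at hadj
    rw [show (0:ℕ)+1 = q.length by omega, q.getVert_length] at hadj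
    exact n14 hadj
  have hle' : q.length ≤ 2 := by rw [hq]; exact hle
  have h2 : q.length = 2 := by omega
  have a01 : (H.induce ({p1, p2, p3, p4} : Set V)).Adj ⟨p1,m1⟩ (q.getVert 1) := by
    have := q.adj_getVert_succ (show 0 < q.length by omega)
    rwa [q.getVert_zero] at this
  have a1e : (H.induce ({p1, p2, p3, p4} : Set V)).Adj (q.getVert 1) ⟨p4,m4⟩ := by
    have := q.adj_getVert_succ (show 1 < q.length by omega)
    rwa [show (1:ℕ)+1 = q.length by omega, q.getVert_length] at this
  have hmem := (q.getVert 1).2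
  simp only [Set.mem_insert_iff, Set.mem_singleton_iff] at hmem
  have g01 : H.Adj p1 ↑(q.getVert 1) := a01
  have g1e : H.Adj ↑(q.getVert 1) p4 := a1e
  rcases hmem with h | h | h | h
  · exact H.irrefl (by rwa [h] at g01)
  · exact n24 (by rwa [h] at g1e)
  · exact n13 (by rwa [h] at g01)
  · exact H.irrefl (by rwa [h] at g1e)

lemma midpt {G : SimpleGraph V} (hc : DistanceHereditary Gᶜ)
    {a b c : V} (hab : a ≠ b) (hnab : ¬ G.Adj a b)
    (p : G.Walk a b) (hp : ∀ w ∈ p.support, w ≠ c ∧ ¬ G.Adj c w) :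
    ∃ x, G.Adj a x ∧ G.Adj x b ∧ x ≠ c ∧ ¬ G.Adj c x := by
  have ha : a ∈ ({z | z ≠ c ∧ ¬ G.Adj c z} : Set V) := hp a p.start_mem_support
  have hb : b ∈ ({z | z ≠ c ∧ ¬ G.Adj c z} : Set V) := hp b p.end_mem_support
  set S : Set V := {z | z ≠ c ∧ ¬ G.Adj c z} with hS
  have hreach : (G.induce S).Reachable ⟨a,ha⟩ ⟨b,hb⟩ := reach_induce p hp ha hb
  obtain ⟨q, hq⟩ := hreach.exists_walk_length_eq_dist
  by_cases h3 : 3 ≤ q.length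
  · exfalso
    have a01 : (G.induce S).Adj ⟨a,ha⟩ (q.getVert 1) := by
      have := q.adj_getVert_succ (show 0 < q.length by omega)
      rwa [q.getVert_zero] at this
    have a12 : (G.induce S).Adj (q.getVert 1) (q.getVert 2) := q.adj_getVert_succ (by omega)
    have a23 : (G.induce S).Adj (q.getVert 2) (q.getVert 3) := q.adj_getVert_succ (by omega)
    obtain ⟨r2, hr2⟩ := exists_suffix_walk q 2
    obtain ⟨r3, hr3⟩ := exists_suffix_walk q 3
    have n02 : ¬ (G.induce S).Adj ⟨a,ha⟩ (q.getVert 2) := by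
      intro h
      have hd := SimpleGraph.dist_le (Walk.cons h r2)
      rw [Walk.length_cons, ← hq] at hd
      omega
    have n03 : ¬ (G.induce S).Adj ⟨a,ha⟩ (q.getVert 3) := by
      intro h
      have hd := SimpleGraph.dist_le (Walk.cons h r3)
      rw [Walk.length_cons, ← hq] at hd
      omega
    have n13 : ¬ (G.induce S).Adj (q.getVert 1) (q.getVert 3) := by
      intro h
      have hd := SimpleGraph.dist_le (Walk.cons a01 (Walk.cons h r3))
      rw [Walk.length_cons, Walk.length_cons, ← hq] at hd
      omega
    have ne02 : (⟨a,ha⟩ : ↥S) ≠ q.getVert 2 := by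
      intro h
      have hd := SimpleGraph.dist_le (r2.copy h.symm rfl)
      rw [Walk.length_copy, ← hq] at hd
      omega
    have ne03 : (⟨a,ha⟩ : ↥S) ≠ q.getVert 3 := by
      intro h
      have hd := SimpleGraph.dist_le (r3.copy h.symm rfl)
      rw [Walk.length_copy, ← hq] at hd
      omega
    have ne13 : q.getVert 1 ≠ q.getVert 3 := by
      intro h
      have hd := SimpleGraph.dist_le (Walk.cons a01 (r3.copy h.symm rfl))
      rw [Walk.length_cons, Walk.length_copy, ← hq] at hd
      omega
    have g01 : G.Adj a ↑(q.getVert 1) := a01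
    have g12 : G.Adj ↑(q.getVert 1) ↑(q.getVert 2) := a12
    have g23 : G.Adj ↑(q.getVert 2) ↑(q.getVert 3) := a23
    have gn02 : ¬ G.Adj a ↑(q.getVert 2) := fun h => n02 h
    have gn03 : ¬ G.Adj a ↑(q.getVert 3) := fun h => n03 h
    have gn13 : ¬ G.Adj ↑(q.getVert 1) ↑(q.getVert 3) := fun h => n13 h
    have e02 : a ≠ ↑(q.getVert 2) := fun h => ne02 (Subtype.ext h)
    have e03 : a ≠ ↑(q.getVert 3) := fun h => ne03 (Subtype.ext h)
    have e13 : (↑(q.getVert 1) : V) ≠ ↑(q.getVert 3) := fun h => ne13 (Subtype.ext h)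
    refine keyL hc (p1 := ↑(q.getVert 1)) (p2 := ↑(q.getVert 3)) (p3 := a) (p4 := ↑(q.getVert 2))
      (w := c) ?_ ?_ ?_ ?_ ?_ ?_ ?_ ?_
    · exact (compl_adj G _ _).mpr ⟨e13, gn13⟩
    · exact (compl_adj G _ _).mpr ⟨fun h => e03 h.symm, fun h => gn03 h.symm⟩
    · exact (compl_adj G _ _).mpr ⟨e02, gn02⟩
    · exact fun h => ((compl_adj G _ _).mp h).2 g01.symm
    · exact fun h => ((compl_adj G _ _).mp h).2 g12
    · exact fun h => ((compl_adj G _ _).mp h).2 g23.symm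
    · exact (compl_adj G _ _).mpr ⟨(q.getVert 1).2.1, fun h => (q.getVert 1).2.2 h.symm⟩
    · exact (compl_adj G _ _).mpr ⟨fun h => (q.getVert 2).2.1 h.symm, (q.getVert 2).2.2⟩
  · have h0 : q.length ≠ 0 := fun h => hab (congrArg Subtype.val (q.eq_of_length_eq_zero h))
    have h1 : q.length ≠ 1 := by
      intro h
      have hadj := q.adj_getVert_succ (show 0 < q.length by omega)
      rw [q.getVert_zero] at hadj
      rw [show (0:ℕ)+1 = q.length by omega, q.getVert_length] at hadj
      exact hnab hadj
    have a01 : (G.induce S).Adj ⟨a,ha⟩ (q.getVert 1) := by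
      have := q.adj_getVert_succ (show 0 < q.length by omega)
      rwa [q.getVert_zero] at this
    have a1e : (G.induce S).Adj (q.getVert 1) ⟨b,hb⟩ := by
      have := q.adj_getVert_succ (show 1 < q.length by omega)
      rwa [show (1:ℕ)+1 = q.length by omega, q.getVert_length] at this
    exact ⟨↑(q.getVert 1), a01, a1e, (q.getVert 1).2.1, (q.getVert 1).2.2⟩

lemma part4 (G : SimpleGraph V) (hG : DistanceHereditary G)
    (hGc : DistanceHereditary Gᶜ) : ATFree G := by
  rintro ⟨a, b, c, dab, dac, dbc, ⟨p1, h1⟩, ⟨p2, h2⟩, ⟨p3, h3⟩⟩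
  have nca : ¬G.Adj c a := (h1 a p1.start_mem_support).2
  have nba : ¬G.Adj b a := (h2 a p2.start_mem_support).2
  have nbc : ¬G.Adj b c := (h2 c p2.end_mem_support).2
  have nab : ¬G.Adj a b := fun h => nba h.symm
  have nac : ¬G.Adj a c := (h3 c p3.end_mem_support).2
  obtain ⟨x, axa, axb, xnc, ncx⟩ := midpt hGc dab nab p1 h1
  obtain ⟨y, aya, ayc, ynb, nby⟩ := midpt hGc dac nac p2 h2
  obtain ⟨z, azb, azc, zna, naz⟩ := midpt hGc dbc nbc p3 h3
  by_cases hxy : G.Adj x y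
  · exact keyL hG (p1 := b) (p2 := x) (p3 := y) (p4 := c) (w := z)
      axb.symm hxy ayc (fun h => nby h) nbc (fun h => ncx h.symm) azb azc
  · by_cases hxz : G.Adj x z
    · exact keyL hG (p1 := a) (p2 := x) (p3 := z) (p4 := c) (w := y)
        axa hxz azc naz nac (fun h => ncx h.symm) aya ayc
    · by_cases hyz : G.Adj y z
      · exact keyL hG (p1 := a) (p2 := y) (p3 := z) (p4 := b) (w := x)
          aya hyz azb.symm naz nab (fun h => nby h.symm) axa axb
      · have hxyne : x ≠ y := fun h => nby (h ▸ axb).symm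
        refine keyL hGc (p1 := x) (p2 := y) (p3 := b) (p4 := a) (w := c) ?_ ?_ ?_ ?_ ?_ ?_ ?_ ?_
        · exact (compl_adj G _ _).mpr ⟨hxyne, hxy⟩
        · exact (compl_adj G _ _).mpr ⟨ynb, fun h => nby h.symm⟩
        · exact (compl_adj G _ _).mpr ⟨fun h => dab h.symm, nba⟩
        · exact fun h => ((compl_adj G _ _).mp h).2 axb
        · exact fun h => ((compl_adj G _ _).mp h).2 axa.symm
        · exact fun h => ((compl_adj G _ _).mp h).2 aya.symm
        · exact (compl_adj G _ _).mpr ⟨xnc, fun h => ncx h.symm⟩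
        · exact (compl_adj G _ _).mpr ⟨fun h => dac h.symm, nca⟩

end F

/-- AT-freeness is closed under twin addition, the Bull is AT-free, every
graph obtained from an induced subgraph of the Bull by twin additions is AT-free, and
every graph in DH ∩ co-DH is AT-free. -/
theorem stmt19 :
    (∀ {V : Type*} (G' : SimpleGraph V) (u v : V), Twins G' u v →
      ATFree (G'.induce {v}ᶜ) → ATFree G') ∧
    ATFree Bull ∧
    (∀ {V : Type*} [Fintype V] (G : SimpleGraph V) (s : Set V),
      Relation.ReflTransGen (TwinElimStep G) Set.univ s →
      Nonempty (G.induce s ↪g Bull) → ATFree G) ∧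
    (∀ {V : Type*} [Fintype V] (G : SimpleGraph V),
      DistanceHereditary G → DistanceHereditary Gᶜ → ATFree G) :=
  ⟨fun G' u v tw h => twinAddATFree G' u v tw h, bullATFree,
   fun G s hrel hemb => part3 G s hrel hemb,
   fun G h1 h2 => part4 G h1 h2⟩
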